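/- The q-exponential operator T(aD_q) satisfies T(aD_q){1/((bx;q)_∞ (cx;q)_∞)} = (abcx;q)_∞ / ((bx;q)_∞ (cx;q)_∞ (ac;q)_∞ (ab;q)_∞). -/

import Mathlib

open Finset Filter

/-- finite q-Pochhammer symbol `(a;q)_n` -/
noncomputable def qPoch (q a : ℂ) (n : ℕ) : ℂ := ∏ j ∈ Finset.range n, (1 - a * q ^ j)

/-- infinite q-Pochhammer symbol `(a;q)_∞` -/
noncomputable def qPochInf (q a : ℂ) : ℂ := ∏' j : ℕ, (1 - a * q ^ j)

/-- Gaussian binomial coefficient `[n choose k]_q` -/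
noncomputable def qbinom (q : ℂ) (n k : ℕ) : ℂ :=
  qPoch q q n / (qPoch q q k * qPoch q q (n - k))

/-- the q-differential operator `D_q` -/
noncomputable def Dq (q : ℂ) (f : ℂ → ℂ) : ℂ → ℂ := fun x => (f x - f (q * x)) / x

/-- homogeneous Hahn polynomial `Φ_m^{(α)}(b,x|q)` -/
noncomputable def hahn (q α b x : ℂ) (m : ℕ) : ℂ :=
  ∑ k ∈ Finset.range (m + 1), qbinom q m k * qPoch q α k * b ^ k * x ^ (m - k)


/-!
Write `f(t) = 1/((bt;q)_∞ (ct;q)_∞)`. Since `f(qt) = (1-bt)(1-ct) f(t)`, induction on `k` gives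
`D_q^k f(t) = Φ_k^{(ct)}(b,c|q) f(t)`, the recurrence of the homogeneous Hahn polynomials being
`q`-Pascal's rule. Expanding the Gaussian binomial, `a^k Φ_k^{(cx)}(b,c|q) / (q;q)_k` is the `k`-th
Cauchy product term of the `q`-binomial series `∑ (cx;q)_n (ab)^n / (q;q)_n` and
`∑ (ac)^n / (q;q)_n`, which the `q`-binomial theorem sums to `(abcx;q)_∞ / (ab;q)_∞` and
`1 / (ac;q)_∞`.

The `q`-binomial theorem `∑ (α;q)_n z^n / (q;q)_n = (αz;q)_∞ / (z;q)_∞` comes from the functional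
equation `(1-z) F(z) = (1-αz) F(qz)` of the left side `F`: iterating it gives
`(z;q)_k F(z) = (αz;q)_k F(q^k z)`, and `F(q^k z) → F(0) = 1` by dominated convergence.
-/

open Topology

lemma one_sub_ne_zero_of_norm_lt_one {R : Type*} [NormedRing R] [NormOneClass R] {w : R}
    (hw : ‖w‖ < 1) : 1 - w ≠ 0 :=
  sub_ne_zero.2 fun h => by simp [← h] at hw

section QPochhammer

variable {q : ℂ}

lemma qPoch_zero (q a : ℂ) : qPoch q a 0 = 1 :=
  prod_range_zero _

lemma qPoch_succ (q a : ℂ) (n : ℕ) : qPoch q a (n + 1) = qPoch q a n * (1 - a * q ^ n) :=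
  prod_range_succ _ _

lemma qPoch_succ' (q a : ℂ) (n : ℕ) : qPoch q a (n + 1) = (1 - a) * qPoch q (a * q) n := by
  simp only [qPoch, prod_range_succ', pow_zero, mul_one, pow_succ', mul_assoc]
  ring

lemma qPoch_zero_left (q : ℂ) (n : ℕ) : qPoch q 0 n = 1 := by
  simp [qPoch]

lemma qPochInf_zero_left (q : ℂ) : qPochInf q 0 = 1 := by
  simp [qPochInf]

lemma norm_mul_pow_lt_one (hq : ‖q‖ ≤ 1) {w : ℂ} (hw : ‖w‖ < 1) (j : ℕ) : ‖w * q ^ j‖ < 1 := by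
  rw [norm_mul, norm_pow]
  exact (mul_le_of_le_one_right (norm_nonneg w) (pow_le_one₀ (norm_nonneg q) hq)).trans_lt hw

lemma one_sub_mul_pow_ne_zero (hq : ‖q‖ ≤ 1) {w : ℂ} (hw : ‖w‖ < 1) (j : ℕ) :
    1 - w * q ^ j ≠ 0 :=
  one_sub_ne_zero_of_norm_lt_one (norm_mul_pow_lt_one hq hw j)

lemma qPoch_ne_zero (hq : ‖q‖ ≤ 1) {w : ℂ} (hw : ‖w‖ < 1) (n : ℕ) : qPoch q w n ≠ 0 :=
  prod_ne_zero_iff.2 fun j _ => one_sub_mul_pow_ne_zero hq hw j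

lemma qPoch_self_ne_zero (hq : ‖q‖ < 1) (n : ℕ) : qPoch q q n ≠ 0 :=
  qPoch_ne_zero hq.le hq n

lemma summable_norm_mul_pow (hq : ‖q‖ < 1) (w : ℂ) : Summable fun j : ℕ => ‖w * q ^ j‖ := by
  simpa only [norm_mul, norm_pow] using
    (summable_geometric_of_lt_one (norm_nonneg q) hq).mul_left ‖w‖

lemma multipliable_one_sub_mul_pow (hq : ‖q‖ < 1) (w : ℂ) :
    Multipliable fun j : ℕ => 1 - w * q ^ j := by
  simpa only [sub_eq_add_neg] using
    multipliable_one_add_of_summable (f := fun j : ℕ => -(w * q ^ j))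
      (by simpa only [norm_neg] using summable_norm_mul_pow hq w)

lemma tendsto_qPoch (hq : ‖q‖ < 1) (w : ℂ) : Tendsto (qPoch q w) atTop (𝓝 (qPochInf q w)) :=
  (multipliable_one_sub_mul_pow hq w).hasProd.tendsto_prod_nat

lemma qPochInf_ne_zero (hq : ‖q‖ < 1) {w : ℂ} (hw : ‖w‖ < 1) : qPochInf q w ≠ 0 := by
  simpa only [qPochInf, sub_eq_add_neg] using
    tprod_one_add_ne_zero_of_summable (f := fun j : ℕ => -(w * q ^ j))
      (by simpa only [← sub_eq_add_neg] using one_sub_mul_pow_ne_zero hq.le hw)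
      (by simpa only [norm_neg] using summable_norm_mul_pow hq w)

lemma qPochInf_eq_one_sub_mul (hq : ‖q‖ < 1) (w : ℂ) :
    qPochInf q w = (1 - w) * qPochInf q (w * q) := by
  have hshift : (fun j : ℕ => 1 - w * q ^ (j + 1)) = fun j => 1 - w * q * q ^ j := by
    simp only [pow_succ', mul_assoc]
  rw [qPochInf, tprod_eq_zero_mul' (by rw [hshift]; exact multipliable_one_sub_mul_pow hq _),
    hshift, pow_zero, mul_one, qPochInf]

end QPochhammer

section QBinomialTheorem

variable {q : ℂ}

noncomputable def qBinomialTerm (q α z : ℂ) (n : ℕ) : ℂ := qPoch q α n / qPoch q q n * z ^ n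

lemma qBinomialTerm_zero (q α z : ℂ) : qBinomialTerm q α z 0 = 1 := by
  simp [qBinomialTerm, qPoch_zero]

lemma qBinomialTerm_mul_left (q α z : ℂ) (n : ℕ) :
    qBinomialTerm q α (q * z) n = q ^ n * qBinomialTerm q α z n := by
  rw [qBinomialTerm, qBinomialTerm, mul_pow]
  ring

lemma one_sub_pow_mul_qBinomialTerm_succ (hq : ‖q‖ < 1) (α z : ℂ) (n : ℕ) :
    (1 - q ^ (n + 1)) * qBinomialTerm q α z (n + 1)
      = z * (1 - α * q ^ n) * qBinomialTerm q α z n := by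
  have hqn : 1 - q * q ^ n ≠ 0 := by
    simpa only [mul_comm q] using one_sub_mul_pow_ne_zero hq.le hq n
  simp only [qBinomialTerm, qPoch_succ, pow_succ']
  field_simp [qPoch_self_ne_zero hq n]

/-- The coefficients `(α;q)_n / (q;q)_n` converge to `(α;q)_∞ / (q;q)_∞`, hence are bounded. -/
lemma exists_norm_qBinomialTerm_le (hq : ‖q‖ < 1) (α : ℂ) :
    ∃ C, 0 ≤ C ∧ ∀ z n, ‖qBinomialTerm q α z n‖ ≤ C * ‖z‖ ^ n := by
  have hlim := (tendsto_qPoch hq α).div (tendsto_qPoch hq q) (qPochInf_ne_zero hq hq)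
  obtain ⟨C, hC⟩ := isBounded_iff_forall_norm_le.1 (Metric.isBounded_range_of_tendsto _ hlim)
  have hcoeff n : ‖qPoch q α n / qPoch q q n‖ ≤ C := hC _ ⟨n, rfl⟩
  refine ⟨C, (norm_nonneg _).trans (hcoeff 0), fun z n => ?_⟩
  rw [qBinomialTerm, norm_mul, norm_pow]
  exact mul_le_mul_of_nonneg_right (hcoeff n) (by positivity)

lemma summable_norm_qBinomialTerm (hq : ‖q‖ < 1) (α : ℂ) {z : ℂ} (hz : ‖z‖ < 1) :
    Summable fun n => ‖qBinomialTerm q α z n‖ := by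
  obtain ⟨C, -, hC⟩ := exists_norm_qBinomialTerm_le hq α
  exact .of_nonneg_of_le (fun n => norm_nonneg _) (hC z)
    ((summable_geometric_of_lt_one (norm_nonneg z) hz).mul_left C)

lemma summable_qBinomialTerm (hq : ‖q‖ < 1) (α : ℂ) {z : ℂ} (hz : ‖z‖ < 1) :
    Summable (qBinomialTerm q α z) :=
  (summable_norm_qBinomialTerm hq α hz).of_norm

lemma one_sub_mul_tsum_qBinomialTerm (hq : ‖q‖ < 1) (α : ℂ) {z : ℂ} (hz : ‖z‖ < 1) :
    (1 - z) * ∑' n, qBinomialTerm q α z n = (1 - α * z) * ∑' n, qBinomialTerm q α (q * z) n := by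
  have hS := summable_qBinomialTerm hq α hz
  have hT := summable_qBinomialTerm hq α (z := q * z)
    (by simpa only [mul_comm q, pow_one] using norm_mul_pow_lt_one hq.le hz 1)
  have hdiff : ∑' n, (qBinomialTerm q α z n - qBinomialTerm q α (q * z) n)
      = ∑' n, (z * qBinomialTerm q α z n - α * z * qBinomialTerm q α (q * z) n) := by
    rw [(hS.sub hT).tsum_eq_zero_add, qBinomialTerm_zero, qBinomialTerm_zero, sub_self, zero_add]
    refine tsum_congr fun n => ?_
    rw [qBinomialTerm_mul_left, qBinomialTerm_mul_left]
    linear_combination one_sub_pow_mul_qBinomialTerm_succ hq α z n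
  rw [hS.tsum_sub hT, (hS.mul_left z).tsum_sub (hT.mul_left (α * z)), tsum_mul_left,
    tsum_mul_left] at hdiff
  linear_combination hdiff

lemma qPoch_mul_tsum_qBinomialTerm (hq : ‖q‖ < 1) (α : ℂ) {z : ℂ} (hz : ‖z‖ < 1) (k : ℕ) :
    qPoch q z k * ∑' n, qBinomialTerm q α z n
      = qPoch q (α * z) k * ∑' n, qBinomialTerm q α (q ^ k * z) n := by
  induction k with
  | zero => simp [qPoch_zero]
  | succ k ih =>
    have hzk : ‖q ^ k * z‖ < 1 := by simpa only [mul_comm] using norm_mul_pow_lt_one hq.le hz k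
    have hfe := one_sub_mul_tsum_qBinomialTerm hq α hzk
    rw [← mul_assoc q, ← pow_succ'] at hfe
    rw [qPoch_succ, qPoch_succ]
    linear_combination (1 - z * q ^ k) * ih + qPoch q (α * z) k * hfe

lemma tendsto_tsum_qBinomialTerm_pow_mul (hq : ‖q‖ < 1) (α : ℂ) {z : ℂ} (hz : ‖z‖ < 1) :
    Tendsto (fun k : ℕ => ∑' n, qBinomialTerm q α (q ^ k * z) n) atTop (𝓝 1) := by
  obtain ⟨C, hC0, hC⟩ := exists_norm_qBinomialTerm_le hq α
  have hsmall : Tendsto (fun k : ℕ => q ^ k * z) atTop (𝓝 0) := by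
    simpa using (tendsto_pow_atTop_nhds_zero_of_norm_lt_one hq).mul_const z
  have hterm n : Tendsto (fun k : ℕ => qBinomialTerm q α (q ^ k * z) n) atTop
      (𝓝 (qBinomialTerm q α 0 n)) :=
    ((continuous_const.mul (continuous_pow n)).tendsto 0).comp hsmall
  have hzero : ∑' n, qBinomialTerm q α 0 n = 1 := by
    rw [tsum_eq_single 0 fun n hn => by simp [qBinomialTerm, hn], qBinomialTerm_zero]
  rw [← hzero]
  refine tendsto_tsum_of_dominated_convergence
    ((summable_geometric_of_lt_one (norm_nonneg z) hz).mul_left C) hterm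
    (.of_forall fun k n => (hC _ n).trans ?_)
  gcongr
  rw [norm_mul, norm_pow]
  exact mul_le_of_le_one_left (norm_nonneg z) (pow_le_one₀ (norm_nonneg q) hq.le)

theorem tsum_qBinomialTerm (hq : ‖q‖ < 1) (α : ℂ) {z : ℂ} (hz : ‖z‖ < 1) :
    ∑' n, qBinomialTerm q α z n = qPochInf q (α * z) / qPochInf q z := by
  have hlim := tendsto_nhds_unique
    (((tendsto_qPoch hq z).mul_const _).congr fun k => qPoch_mul_tsum_qBinomialTerm hq α hz k)
    ((tendsto_qPoch hq (α * z)).mul (tendsto_tsum_qBinomialTerm_pow_mul hq α hz))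
  rw [mul_one] at hlim
  rw [eq_div_iff (qPochInf_ne_zero hq hz), mul_comm, hlim]

end QBinomialTheorem

section Hahn

variable {q : ℂ}

lemma qbinom_zero_right (hq : ‖q‖ < 1) (n : ℕ) : qbinom q n 0 = 1 := by
  rw [qbinom, Nat.sub_zero, qPoch_zero, one_mul, div_self (qPoch_self_ne_zero hq n)]

lemma qbinom_self (hq : ‖q‖ < 1) (n : ℕ) : qbinom q n n = 1 := by
  rw [qbinom, Nat.sub_self, qPoch_zero, mul_one, div_self (qPoch_self_ne_zero hq n)]

lemma qbinom_succ_succ (hq : ‖q‖ < 1) {k i : ℕ} (h : i < k) :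
    qbinom q (k + 1) (i + 1) = q ^ (i + 1) * qbinom q k (i + 1) + qbinom q k i := by
  obtain ⟨j, rfl⟩ : ∃ j, k = i + 1 + j := ⟨k - i - 1, by omega⟩
  have hne (n : ℕ) : 1 - q * q ^ n ≠ 0 := by
    simpa only [mul_comm q] using one_sub_mul_pow_ne_zero hq.le hq n
  rw [qbinom, qbinom, qbinom, show i + 1 + j + 1 - (i + 1) = j + 1 by omega,
    show i + 1 + j - (i + 1) = j by omega, show i + 1 + j - i = j + 1 by omega,
    qPoch_succ, qPoch_succ, qPoch_succ]
  field_simp [qPoch_self_ne_zero hq, hne]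
  ring

/-- Summation form of `q`-Pascal's rule. -/
lemma sum_range_qbinom_succ (hq : ‖q‖ < 1) (k : ℕ) (g : ℕ → ℂ) :
    ∑ i ∈ range (k + 1 + 1), qbinom q (k + 1) i * g i
      = ∑ i ∈ range (k + 1), qbinom q k i * (q ^ i * g i + g (i + 1)) := by
  simp only [mul_add, sum_add_distrib]
  rw [sum_range_succ', sum_range_succ, sum_range_succ', sum_range_succ _ k,
    sum_congr rfl fun i hi => by rw [qbinom_succ_succ hq (mem_range.1 hi)]]
  simp only [qbinom_zero_right hq, qbinom_self hq, add_mul, sum_add_distrib]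
  simp only [mul_assoc, mul_left_comm (qbinom q k _), one_mul, pow_zero]
  ring

lemma hahn_sub_mul_hahn (hq : ‖q‖ < 1) (b c t : ℂ) (k : ℕ) :
    hahn q (c * t) b c k - (1 - b * t) * (1 - c * t) * hahn q (c * (q * t)) b c k
      = t * hahn q (c * t) b c (k + 1) := by
  simp only [hahn, mul_assoc]
  rw [sum_range_qbinom_succ hq]
  simp only [Finset.mul_sum, ← sum_sub_distrib]
  refine sum_congr rfl fun i hi => ?_
  have hik : i ≤ k := Nat.lt_succ_iff.1 (mem_range.1 hi)
  have hfront := qPoch_succ' q (c * t) i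
  rw [show c * t * q = c * (q * t) by ring] at hfront
  rw [show k + 1 - i = k - i + 1 by omega, Nat.add_sub_add_right, pow_succ, pow_succ]
  linear_combination (qbinom q k i * b ^ i * c ^ (k - i)) *
    ((1 - b * t) * hfront - qPoch_succ q (c * t) i)

end Hahn

section QExponentialOperator

variable {q : ℂ}

lemma inv_qPochInf_mul_qPochInf_mul_left (hq : ‖q‖ < 1) {b c t : ℂ} (hbt : 1 - b * t ≠ 0)
    (hct : 1 - c * t ≠ 0) :
    1 / (qPochInf q (b * (q * t)) * qPochInf q (c * (q * t)))
      = (1 - b * t) * (1 - c * t) * (1 / (qPochInf q (b * t) * qPochInf q (c * t))) := by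
  rw [show b * (q * t) = b * t * q by ring, show c * (q * t) = c * t * q by ring,
    qPochInf_eq_one_sub_mul hq (b * t), qPochInf_eq_one_sub_mul hq (c * t), mul_mul_mul_comm,
    ← one_div_mul_one_div ((1 - b * t) * (1 - c * t)), ← mul_assoc,
    mul_one_div_cancel (mul_ne_zero hbt hct), one_mul]

lemma iterate_Dq_inv_qPochInf_mul (hq0 : q ≠ 0) (hq : ‖q‖ < 1) (b c : ℂ) (k : ℕ) {t : ℂ}
    (ht : t ≠ 0) (hbt : ‖b * t‖ < 1) (hct : ‖c * t‖ < 1) :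
    (Dq q)^[k] (fun t => 1 / (qPochInf q (b * t) * qPochInf q (c * t))) t
      = hahn q (c * t) b c k * (1 / (qPochInf q (b * t) * qPochInf q (c * t))) := by
  induction k generalizing t with
  | zero => simp [hahn, qbinom_self hq, qPoch_zero]
  | succ k ih =>
    have hqt {w : ℂ} (hw : ‖w * t‖ < 1) : ‖w * (q * t)‖ < 1 := by
      simpa only [pow_one, mul_comm q, mul_assoc] using norm_mul_pow_lt_one hq.le hw 1
    rw [Function.iterate_succ_apply', Dq, ih ht hbt hct,
      ih (mul_ne_zero hq0 ht) (hqt hbt) (hqt hct),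
      inv_qPochInf_mul_qPochInf_mul_left hq (one_sub_ne_zero_of_norm_lt_one hbt)
        (one_sub_ne_zero_of_norm_lt_one hct),
      div_eq_iff ht]
    linear_combination
      (1 / (qPochInf q (b * t) * qPochInf q (c * t))) * hahn_sub_mul_hahn hq b c t k

lemma pow_div_qPoch_mul_hahn (hq : ‖q‖ < 1) (a α b c : ℂ) (k : ℕ) :
    a ^ k / qPoch q q k * hahn q α b c k
      = ∑ i ∈ range (k + 1), qBinomialTerm q α (a * b) i * qBinomialTerm q 0 (a * c) (k - i) := by
  rw [hahn, Finset.mul_sum]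
  refine sum_congr rfl fun i hi => ?_
  have hik : i ≤ k := Nat.lt_succ_iff.1 (mem_range.1 hi)
  rw [qBinomialTerm, qBinomialTerm, qPoch_zero_left, qbinom,
    show a ^ k = a ^ i * a ^ (k - i) by rw [← pow_add, Nat.add_sub_cancel' hik]]
  field_simp [qPoch_self_ne_zero hq]
  ring

end QExponentialOperator

/-- Chen–Liu q-exponential operator identity. -/
theorem qexp_op_inv_two_qPochInf (q a b c : ℂ) (hq0 : q ≠ 0) (hq : ‖q‖ < 1)
    (hab : ‖a * b‖ < 1) (hac : ‖a * c‖ < 1) (x : ℂ) (hx : x ≠ 0)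
    (hbx : ‖b * x‖ < 1) (hcx : ‖c * x‖ < 1) :
    ∑' k : ℕ, a ^ k / qPoch q q k *
        ((Dq q)^[k] (fun t => 1 / (qPochInf q (b * t) * qPochInf q (c * t))) x)
      = qPochInf q (a * b * c * x) /
          (qPochInf q (b * x) * qPochInf q (c * x) * qPochInf q (a * c) *
            qPochInf q (a * b)) := by
  calc _ = ∑' k : ℕ, (∑ i ∈ range (k + 1),
          qBinomialTerm q (c * x) (a * b) i * qBinomialTerm q 0 (a * c) (k - i)) *
          (1 / (qPochInf q (b * x) * qPochInf q (c * x))) :=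
        tsum_congr fun k => by
          rw [iterate_Dq_inv_qPochInf_mul hq0 hq b c k hx hbx hcx, ← mul_assoc,
            pow_div_qPoch_mul_hahn hq]
    _ = (∑' n, qBinomialTerm q (c * x) (a * b) n) * (∑' n, qBinomialTerm q 0 (a * c) n) *
          (1 / (qPochInf q (b * x) * qPochInf q (c * x))) := by
        rw [tsum_mul_right, tsum_mul_tsum_eq_tsum_sum_range_of_summable_norm
          (summable_norm_qBinomialTerm hq _ hab) (summable_norm_qBinomialTerm hq _ hac)]
    _ = _ := by
        rw [tsum_qBinomialTerm hq _ hab, tsum_qBinomialTerm hq _ hac, zero_mul, qPochInf_zero_left,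
          show c * x * (a * b) = a * b * c * x by ring]
        ring
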